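/- For all integers n ≥ m ≥ 2, the locating chromatic number of the grid P_m □ P_n equals 4. -/

import Mathlib

open SimpleGraph

/-- The distance from a vertex to a set of vertices. -/
noncomputable def setDist {V : Type*} (G : SimpleGraph V) (v : V) (S : Set V) : ℕ :=
  sInf (G.dist v '' S)

/-- The color code of a vertex with respect to a `k`-coloring `c`:
the tuple of distances to the color classes. -/
noncomputable def colorCode {V : Type*} (G : SimpleGraph V) {k : ℕ} (c : V → Fin k)
    (v : V) : Fin k → ℕ :=
  fun i => setDist G v (c ⁻¹' {i})

/-- `c` is a locating `k`-coloring of `G`: a proper coloring onto the `k` colors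
such that distinct vertices have distinct color codes. -/
def IsLocatingColoring {V : Type*} (G : SimpleGraph V) {k : ℕ} (c : V → Fin k) : Prop :=
  Function.Surjective c ∧
  (∀ u v : V, G.Adj u v → c u ≠ c v) ∧
  Function.Injective (colorCode G c)

/-- The locating chromatic number: the least `k` admitting a locating `k`-coloring. -/
noncomputable def locatingChromaticNumber {V : Type*} (G : SimpleGraph V) : ℕ :=
  sInf {k : ℕ | ∃ c : V → Fin k, IsLocatingColoring G c}

/-- A vertex is colorful w.r.t. a coloring `c` if every color appears in its
closed neighborhood. -/
def IsColorful {V : Type*} (G : SimpleGraph V) {k : ℕ} (c : V → Fin k) (v : V) : Prop :=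
  ∀ i : Fin k, ∃ u : V, (u = v ∨ G.Adj v u) ∧ c u = i

/-!
The parity coloring of the grid with the corners `(0,0)` and `(m-1,0)` recolored by two new
colors is a locating 4-coloring: the distances to these two corners recover both coordinates.

Conversely, two colors never suffice, because every vertex has a neighbor of the other color, so
the color code of a vertex is determined by its own color. With three colors, if opposite
corners of a unit square had different colors, the other two corners would both get the third
color and share their color code; so diagonals are monochromatic. Then `(0,0)` and `(1,1)` share
a color, and sliding vertices along diagonals shows that they are equally far from every color
class.
-/

namespace SimpleGraph

variable {α β : Type*} {G : SimpleGraph α} {H : SimpleGraph β}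

lemma dist_boxProd (hG : G.Preconnected) (hH : H.Preconnected) (x y : α × β) :
    (G □ H).dist x y = G.dist x.1 y.1 + H.dist x.2 y.2 := by
  rw [dist, edist_boxProd, ENat.toNat_add (edist_ne_top_iff_reachable.mpr (hG _ _))
    (edist_ne_top_iff_reachable.mpr (hH _ _))]
  rfl

lemma pathGraph_connected_of_pos {n : ℕ} (hn : 0 < n) : (pathGraph n).Connected :=
  haveI : Nonempty (Fin n) := ⟨⟨0, hn⟩⟩
  ⟨pathGraph_preconnected n⟩

lemma Walk.natDist_le_length_pathGraph {n : ℕ} {a b : Fin n} (w : (pathGraph n).Walk a b) :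
    Nat.dist a b ≤ w.length := by
  induction w with
  | nil => simp
  | cons h _ ih =>
    rw [Walk.length_cons]
    rcases pathGraph_adj.mp h with h | h <;> unfold Nat.dist at * <;> omega

lemma pathGraph_dist_le_of_add {n : ℕ} (k : ℕ) :
    ∀ a b : Fin n, a.val + k = b.val → (pathGraph n).dist a b ≤ k := by
  induction k with
  | zero => intro a b h; simp [Fin.ext (by omega : a.val = b.val)]
  | succ k ih =>
    intro a b h
    let b' : Fin n := ⟨b - 1, by omega⟩
    have hadj : (pathGraph n).Adj b' b := pathGraph_adj.mpr (Or.inl (by simp [b']; omega))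
    calc (pathGraph n).dist a b ≤ (pathGraph n).dist a b' + (pathGraph n).dist b' b :=
          (pathGraph_connected_of_pos a.pos).dist_triangle
      _ ≤ k + 1 := add_le_add (ih a b' (by simp [b']; omega)) (dist_eq_one_iff_adj.mpr hadj).le

lemma pathGraph_dist {n : ℕ} (a b : Fin n) : (pathGraph n).dist a b = Nat.dist a b := by
  refine le_antisymm ?_ ?_
  · rcases le_total a.val b.val with h | h
    · exact pathGraph_dist_le_of_add _ a b (by unfold Nat.dist; omega)
    · rw [dist_comm, Nat.dist_comm]
      exact pathGraph_dist_le_of_add _ b a (by unfold Nat.dist; omega)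
  · obtain ⟨w, hw⟩ := (pathGraph_preconnected n a b).exists_walk_length_eq_dist
    exact hw ▸ w.natDist_le_length_pathGraph

end SimpleGraph

section SetDist

variable {V : Type*} {G : SimpleGraph V} {u v w : V} {S : Set V}

lemma setDist_le_dist (hw : w ∈ S) : setDist G v S ≤ G.dist v w :=
  Nat.sInf_le ⟨w, hw, rfl⟩

lemma exists_mem_dist_eq_setDist (hS : S.Nonempty) : ∃ w ∈ S, G.dist v w = setDist G v S :=
  Nat.sInf_mem (hS.image _)

lemma setDist_eq_zero_of_mem (hv : v ∈ S) : setDist G v S = 0 :=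
  Nat.le_zero.mp (dist_self (G := G) (v := v) ▸ setDist_le_dist hv)

lemma setDist_eq_one_of_adj (hG : G.Connected) (hv : v ∉ S) (hw : w ∈ S) (hadj : G.Adj v w) :
    setDist G v S = 1 := by
  refine le_antisymm (dist_eq_one_iff_adj.mpr hadj ▸ setDist_le_dist hw) ?_
  obtain ⟨x, hx, hdist⟩ := exists_mem_dist_eq_setDist (G := G) (v := v) ⟨w, hw⟩
  rw [← hdist, Nat.one_le_iff_ne_zero, Ne, hG.dist_eq_zero_iff]
  rintro rfl
  exact hv hx

lemma setDist_le_setDist (h : ∀ w ∈ S, ∃ w' ∈ S, G.dist u w' ≤ G.dist v w) :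
    setDist G u S ≤ setDist G v S := by
  rcases S.eq_empty_or_nonempty with rfl | hS
  · simp [setDist]
  obtain ⟨w, hw, hdist⟩ := exists_mem_dist_eq_setDist (G := G) (v := v) hS
  obtain ⟨w', hw', hle⟩ := h w hw
  exact (setDist_le_dist hw').trans (hdist ▸ hle)

end SetDist

section ColorCode

variable {V : Type*} {G : SimpleGraph V} {k : ℕ} {c : V → Fin k} {u v : V}

lemma colorCode_self (G : SimpleGraph V) (c : V → Fin k) (v : V) : colorCode G c v (c v) = 0 :=
  setDist_eq_zero_of_mem rfl

lemma colorCode_of_isColorful (hG : G.Connected) (hv : IsColorful G c v) (i : Fin k) :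
    colorCode G c v i = if c v = i then 0 else 1 := by
  split_ifs with hi
  · exact hi ▸ colorCode_self G c v
  obtain ⟨u, rfl | hadj, rfl⟩ := hv i
  · exact absurd rfl hi
  · exact setDist_eq_one_of_adj hG hi rfl hadj

lemma colorCode_eq_of_isColorful (hG : G.Connected) (hu : IsColorful G c u)
    (hv : IsColorful G c v) (h : c u = c v) : colorCode G c u = colorCode G c v := by
  funext i
  rw [colorCode_of_isColorful hG hu, colorCode_of_isColorful hG hv, h]

namespace IsLocatingColoring

lemma two_le (hc : IsLocatingColoring G c) (hadj : G.Adj u v) : 2 ≤ k := by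
  by_contra! hk
  exact hc.2.1 u v hadj (Fin.ext (by omega))

lemma injective_of_fin_two {c : V → Fin 2} (hG : G.Connected) (hc : IsLocatingColoring G c)
    (hnbr : ∀ v, ∃ u, G.Adj v u) : Function.Injective c := by
  have hcolorful (v : V) : IsColorful G c v := by
    obtain ⟨u, hadj⟩ := hnbr v
    have hne := hc.2.1 v u hadj
    intro i
    by_cases hi : c v = i
    · exact ⟨v, Or.inl rfl, hi⟩
    · exact ⟨u, Or.inr hadj, by omega⟩
  exact fun u v h ↦ hc.2.2 (colorCode_eq_of_isColorful hG (hcolorful u) (hcolorful v) h)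

lemma apply_eq_of_common_neighbors {c : V → Fin 3} (hG : G.Connected)
    (hc : IsLocatingColoring G c) {x y v w : V} (hvw : v ≠ w)
    (hxv : G.Adj x v) (hyv : G.Adj y v) (hxw : G.Adj x w) (hyw : G.Adj y w) : c x = c y := by
  by_contra hxy
  -- both common neighbors carry the third color and see all three colors around them
  have hcolorful {z : V} (hxz : G.Adj x z) (hyz : G.Adj y z) : IsColorful G c z := by
    have hx := hc.2.1 x z hxz
    have hy := hc.2.1 y z hyz
    intro i
    by_cases hi : c z = i
    · exact ⟨z, Or.inl rfl, hi⟩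
    by_cases hix : c x = i
    · exact ⟨x, Or.inr hxz.symm, hix⟩
    · exact ⟨y, Or.inr hyz.symm, by omega⟩
  have hvw_color : c v = c w := by
    have := hc.2.1 x v hxv; have := hc.2.1 y v hyv
    have := hc.2.1 x w hxw; have := hc.2.1 y w hyw
    omega
  exact hvw (hc.2.2 (colorCode_eq_of_isColorful hG (hcolorful hxv hyv) (hcolorful hxw hyw)
    hvw_color))

end IsLocatingColoring

end ColorCode

section Grid

variable {m n : ℕ}

lemma grid_dist (x y : Fin m × Fin n) :
    (pathGraph m □ pathGraph n).dist x y = Nat.dist x.1 y.1 + Nat.dist x.2 y.2 := by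
  rw [dist_boxProd (pathGraph_preconnected m) (pathGraph_preconnected n), pathGraph_dist,
    pathGraph_dist]

lemma grid_adj_iff {x y : Fin m × Fin n} :
    (pathGraph m □ pathGraph n).Adj x y ↔ Nat.dist x.1 y.1 + Nat.dist x.2 y.2 = 1 := by
  rw [← dist_eq_one_iff_adj, grid_dist]

lemma grid_connected (hm : 0 < m) (hn : 0 < n) : (pathGraph m □ pathGraph n).Connected :=
  (pathGraph_connected_of_pos hm).boxProd (pathGraph_connected_of_pos hn)

def gridColoring (m n : ℕ) (x : Fin m × Fin n) : Fin 4 :=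
  if x.1.val = 0 ∧ x.2.val = 0 then 3
  else if x.1.val = m - 1 ∧ x.2.val = 0 then 2
  else ⟨(x.1.val + x.2.val) % 2, by omega⟩

lemma gridColoring_preimage_three (hm : 0 < m) (hn : 0 < n) :
    gridColoring m n ⁻¹' {3} = {(⟨0, hm⟩, ⟨0, hn⟩)} := by
  ext ⟨a, b⟩
  simp only [Set.mem_preimage, Set.mem_singleton_iff, gridColoring, Prod.ext_iff, Fin.ext_iff,
    apply_ite Fin.val, Fin.coe_ofNat_eq_mod]
  split_ifs <;> omega

lemma gridColoring_preimage_two (hm : 2 ≤ m) (hn : 0 < n) :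
    gridColoring m n ⁻¹' {2} = {(⟨m - 1, by omega⟩, ⟨0, hn⟩)} := by
  ext ⟨a, b⟩
  simp only [Set.mem_preimage, Set.mem_singleton_iff, gridColoring, Prod.ext_iff, Fin.ext_iff,
    apply_ite Fin.val, Fin.coe_ofNat_eq_mod]
  split_ifs <;> omega

lemma gridColoring_isLocatingColoring (hm : 2 ≤ m) (hn : 2 ≤ n) :
    IsLocatingColoring (pathGraph m □ pathGraph n) (gridColoring m n) := by
  refine ⟨?_, ?_, ?_⟩
  · intro i
    fin_cases i
    · exact ⟨(⟨1, by omega⟩, ⟨1, by omega⟩), by simp [gridColoring]⟩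
    · exact ⟨(⟨0, by omega⟩, ⟨1, by omega⟩), by simp [gridColoring]⟩
    · exact ⟨(⟨m - 1, by omega⟩, ⟨0, by omega⟩), by simp [gridColoring]; omega⟩
    · exact ⟨(⟨0, by omega⟩, ⟨0, by omega⟩), by simp [gridColoring]⟩
  · intro x y hadj
    rw [grid_adj_iff] at hadj
    unfold Nat.dist at hadj
    simp only [gridColoring, ne_eq, Fin.ext_iff, apply_ite Fin.val, Fin.coe_ofNat_eq_mod]
    split_ifs <;> omega
  · intro x y h
    have h3 := congrFun h 3
    have h2 := congrFun h 2
    simp only [colorCode, gridColoring_preimage_three (by omega : 0 < m) (by omega : 0 < n),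
      gridColoring_preimage_two hm (by omega : 0 < n), setDist, Set.image_singleton,
      csInf_singleton, grid_dist, Nat.dist] at h3 h2
    have := x.1.isLt; have := y.1.isLt
    ext <;> omega

lemma grid_exists_adj (hm : 2 ≤ m) (x : Fin m × Fin n) :
    ∃ y, (pathGraph m □ pathGraph n).Adj x y := by
  refine ⟨(⟨if x.1.val = 0 then 1 else x.1.val - 1, by split_ifs <;> omega⟩, x.2), ?_⟩
  rw [grid_adj_iff]
  unfold Nat.dist
  split_ifs <;> simp only [tsub_self, add_zero] <;> omega

lemma grid_apply_eq_apply_add_one {c : Fin m × Fin n → Fin 3}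
    (hc : IsLocatingColoring (pathGraph m □ pathGraph n) c) {x y : Fin m × Fin n}
    (h₁ : y.1.val = x.1.val + 1) (h₂ : y.2.val = x.2.val + 1) : c x = c y := by
  have hadj {u v : Fin m × Fin n} (h : Nat.dist u.1 v.1 + Nat.dist u.2 v.2 = 1) :
      (pathGraph m □ pathGraph n).Adj u v := grid_adj_iff.mpr h
  refine hc.apply_eq_of_common_neighbors (grid_connected x.1.pos x.2.pos)
    (v := (y.1, x.2)) (w := (x.1, y.2)) (fun h ↦ by simp [Prod.ext_iff, Fin.ext_iff] at h; omega)
    (hadj ?_) (hadj ?_) (hadj ?_) (hadj ?_) <;> simp only [Nat.dist] <;> omega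

lemma grid_apply_eq_of_diagonal {c : Fin m × Fin n → Fin 3}
    (hc : IsLocatingColoring (pathGraph m □ pathGraph n) c) (k : ℕ) :
    ∀ {x y : Fin m × Fin n}, y.1.val = x.1.val + k → y.2.val = x.2.val + k → c x = c y := by
  induction k with
  | zero => intro x y h₁ h₂; rw [Prod.ext (Fin.ext h₁) (Fin.ext h₂)]
  | succ k ih =>
    intro x y h₁ h₂
    let y' : Fin m × Fin n := (⟨y.1 - 1, by omega⟩, ⟨y.2 - 1, by omega⟩)
    exact (ih (y := y') (by simp [y']; omega) (by simp [y']; omega)).trans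
      (grid_apply_eq_apply_add_one hc (by simp [y']; omega) (by simp [y']; omega))

lemma grid_not_isLocatingColoring_fin_three (hm : 2 ≤ m) (hn : 2 ≤ n)
    (c : Fin m × Fin n → Fin 3) : ¬IsLocatingColoring (pathGraph m □ pathGraph n) c := by
  intro hc
  let o : Fin m × Fin n := (⟨0, by omega⟩, ⟨0, by omega⟩)
  let o' : Fin m × Fin n := (⟨1, by omega⟩, ⟨1, by omega⟩)
  have hcolor : c o = c o' := grid_apply_eq_apply_add_one hc rfl rfl
  have hne : o ≠ o' := by simp [o, o', Prod.ext_iff]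
  refine hne (hc.2.2 (funext fun i ↦ ?_))
  by_cases hi : c o = i
  · rw [← hi, colorCode_self, hcolor, colorCode_self]
  refine le_antisymm (setDist_le_setDist fun w hw ↦ ?_) (setDist_le_setDist fun w hw ↦ ?_)
  · let d := min w.1.val w.2.val
    let w' : Fin m × Fin n := (⟨w.1 - d, by omega⟩, ⟨w.2 - d, by omega⟩)
    have hw' : c w' = c w := grid_apply_eq_of_diagonal hc d (by simp [w', d])
      (by simp [w', d])
    refine ⟨w', hw'.trans hw, ?_⟩
    simp only [grid_dist, Nat.dist, w', o, o', d]
    omega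
  · have hwo : w ≠ o := by rintro rfl; exact hi hw
    refine ⟨w, hw, ?_⟩
    simp only [grid_dist, Nat.dist, o, o']
    simp only [ne_eq, Prod.ext_iff, Fin.ext_iff, o] at hwo
    omega

lemma grid_four_le {k : ℕ} (hm : 2 ≤ m) (hn : 2 ≤ n) {c : Fin m × Fin n → Fin k}
    (hc : IsLocatingColoring (pathGraph m □ pathGraph n) c) : 4 ≤ k := by
  obtain ⟨y, hadj⟩ := grid_exists_adj hm ((⟨0, by omega⟩, ⟨0, by omega⟩) : Fin m × Fin n)
  have h2 := hc.two_le hadj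
  by_contra! hk
  interval_cases k
  · have := Fintype.card_le_of_injective c
      (hc.injective_of_fin_two (grid_connected (by omega) (by omega)) (grid_exists_adj hm))
    simp only [Fintype.card_prod, Fintype.card_fin] at this
    nlinarith
  · exact grid_not_isLocatingColoring_fin_three hm hn c hc

end Grid

/-- For all `n ≥ m ≥ 2`, the locating chromatic number of the grid
`P_m □ P_n` equals `4`. -/
theorem stmt3 (m n : ℕ) (hm : 2 ≤ m) (hmn : m ≤ n) :
    locatingChromaticNumber (pathGraph m □ pathGraph n) = 4 := by
  have hn : 2 ≤ n := hm.trans hmn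
  have h4 : 4 ∈ {k : ℕ | ∃ c : Fin m × Fin n → Fin k,
      IsLocatingColoring (pathGraph m □ pathGraph n) c} :=
    ⟨gridColoring m n, gridColoring_isLocatingColoring hm hn⟩
  refine le_antisymm (Nat.sInf_le h4) (le_csInf ⟨4, h4⟩ ?_)
  rintro k ⟨c, hc⟩
  exact grid_four_le hm hn hc
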